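/- For the Sp(2n,ℝ)-module 𝕊⊥ (the defining 2n-dimensional representation) and the spaces 𝕊⊥^ℓ defined inductively by 𝕊⊥² = Sym²𝕊⊥ ⊕ ℝ and 𝕊⊥^ℓ = (𝕊⊥⊗𝕊⊥^{ℓ−1}) ∩ (𝕊⊥^{ℓ−1}⊗𝕊⊥) for ℓ ≥ 3 (n ≥ 2), the sequence 0 → 𝕊⊥^j → 𝕊⊥⊗𝕊⊥^{j−1} → Λ²⊥𝕊⊥ ⊗ 𝕊⊥^{j−2} is exact, where the second map is induced by projecting the first two tensor factors onto Λ²⊥𝕊⊥ (the kernel of the symplectic form on Λ²𝕊⊥). -/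

import Mathlib

open scoped BigOperators

/-- Membership in `𝕊⊥^ℓ ⊆ ⊗^ℓ 𝕊⊥`, defined inductively:
`𝕊⊥² = Sym²𝕊⊥ ⊕ ℝ·L` and `𝕊⊥^ℓ = (𝕊⊥ ⊗ 𝕊⊥^{ℓ−1}) ∩ (𝕊⊥^{ℓ−1} ⊗ 𝕊⊥)` for `ℓ ≥ 3`. -/
def memS {V : Type*} [AddCommGroup V] [Module ℝ V]
    (L : V →ₗ[ℝ] V →ₗ[ℝ] ℝ) : (ℓ : ℕ) → ((Fin ℓ → V) → ℝ) → Prop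
  | 0, _ => True
  | 1, _ => True
  | 2, f => ∃ Q : ℝ, ∀ v : Fin 2 → V,
      f v - f (v ∘ Equiv.swap 0 1) = 2 * Q * L (v 0) (v 1)
  | (m + 3), f =>
      (∀ x : V, memS L (m + 2) (fun v => f (Fin.cons x v))) ∧
      (∀ x : V, memS L (m + 2) (fun v => f (Fin.snoc v x)))

section Aux

variable {V : Type*} [AddCommGroup V] [Module ℝ V] (L : V →ₗ[ℝ] V →ₗ[ℝ] ℝ)

lemma memS_snoc' {k : ℕ} {f : (Fin (k + 2) → V) → ℝ} (h : memS L (k + 2) f) (z : V) :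
    memS L (k + 1) (fun v => f (Fin.snoc v z)) := by
  cases k with
  | zero => trivial
  | succ k => exact h.2 z

private lemma cons_cons_snoc {k : ℕ} (u v : V) (w : Fin (k + 1) → V) :
    Fin.snoc (Fin.cons u (Fin.cons v (Fin.init w))) (w (Fin.last k))
      = (Fin.cons u (Fin.cons v w) : Fin (k + 3) → V) := by
  rw [← Fin.cons_snoc_eq_snoc_cons, ← Fin.cons_snoc_eq_snoc_cons, Fin.snoc_init_self]

lemma memS_pair0 : ∀ {k : ℕ} {f : (Fin (k + 2) → V) → ℝ}, memS L (k + 2) f →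
    ∀ w : Fin k → V, ∃ Q : ℝ, ∀ x y : V,
      f (Fin.cons x (Fin.cons y w)) - f (Fin.cons y (Fin.cons x w)) = 2 * Q * L x y := by
  intro k
  induction k with
  | zero =>
    intro f h w
    obtain ⟨Q, hQ⟩ := h
    refine ⟨Q, fun x y => ?_⟩
    have hv : ((Fin.cons x (Fin.cons y w) : Fin 2 → V) ∘ Equiv.swap 0 1)
        = Fin.cons y (Fin.cons x w) := by
      funext i
      fin_cases i <;> simp [Equiv.swap_apply_left, Equiv.swap_apply_right]
    have := hQ (Fin.cons x (Fin.cons y w))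
    rw [hv] at this
    simpa using this
  | succ k ih =>
    intro f h w
    obtain ⟨Q, hQ⟩ := ih (memS_snoc' L h (w (Fin.last k))) (Fin.init w)
    refine ⟨Q, fun x y => ?_⟩
    have h1 := hQ x y
    simp only [cons_cons_snoc] at h1
    exact h1

lemma memS_build : ∀ (k : ℕ) (f : (Fin (k + 2) → V) → ℝ),
    (∀ x : V, memS L (k + 1) (fun v => f (Fin.cons x v))) →
    (∀ w : Fin k → V, ∃ Q : ℝ, ∀ x y : V,
      f (Fin.cons x (Fin.cons y w)) - f (Fin.cons y (Fin.cons x w)) = 2 * Q * L x y) →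
    memS L (k + 2) f := by
  intro k
  induction k with
  | zero =>
    intro f _ hp
    obtain ⟨Q, hQ⟩ := hp Fin.elim0
    refine ⟨Q, fun v => ?_⟩
    have hv : v = Fin.cons (v 0) (Fin.cons (v 1) Fin.elim0) := by
      funext i; fin_cases i <;> simp
    have hv' : v ∘ Equiv.swap 0 1 = Fin.cons (v 1) (Fin.cons (v 0) Fin.elim0) := by
      funext i; fin_cases i <;>
        simp [Equiv.swap_apply_left, Equiv.swap_apply_right]
    rw [hv', ]
    nth_rewrite 1 [hv]
    exact hQ (v 0) (v 1)
  | succ k ih =>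
    intro f hc hp
    refine ⟨hc, fun z => ?_⟩
    apply ih
    · intro x
      have := memS_snoc' L (hc x) z
      have he : (fun v : Fin (k + 1) → V => f (Fin.cons x (Fin.snoc v z)))
          = fun v : Fin (k + 1) → V => f (Fin.snoc (Fin.cons x v) z) := by
        funext v
        rw [Fin.cons_snoc_eq_snoc_cons]
      rw [he] at this
      exact this
    · intro w
      obtain ⟨Q, hQ⟩ := hp (Fin.snoc w z)
      refine ⟨Q, fun x y => ?_⟩
      have h1 := hQ x y
      simp only [← Fin.cons_snoc_eq_snoc_cons] at *
      exact h1

end Aux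

/-- For the defining representation `𝕊⊥ = ℝ^{2n}` of `Sp(2n,ℝ)`,
`n ≥ 2`, and the spaces `𝕊⊥^ℓ` defined inductively as above, the sequence
`0 → 𝕊⊥^j → 𝕊⊥ ⊗ 𝕊⊥^{j−1} → Λ²⊥𝕊⊥ ⊗ 𝕊⊥^{j−2}` is exact, the second map `ð` being
induced by projecting the first two tensor factors onto `Λ²⊥𝕊⊥` (the kernel of the
symplectic form on `Λ²𝕊⊥`), namely skew-symmetrisation in the first two slots with
the symplectic trace removed. -/
theorem statement17 {V : Type*} [AddCommGroup V] [Module ℝ V] [FiniteDimensional ℝ V]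
    (n : ℕ) (hn : 2 ≤ n) (hdim : Module.finrank ℝ V = 2 * n)
    (L : V →ₗ[ℝ] V →ₗ[ℝ] ℝ)
    (halt : ∀ x : V, L x x = 0)
    (hnd : ∀ x : V, (∀ y : V, L x y = 0) → x = 0)
    (e : Module.Basis (Fin (2 * n)) ℝ V)
    (Linv : Fin (2 * n) → Fin (2 * n) → ℝ)
    (hinv : ∀ b c, (∑ a, Linv a b * L (e a) (e c)) = if b = c then (1 : ℝ) else 0)
    (m : ℕ) (hm : 1 ≤ m)
    (φ : MultilinearMap ℝ (fun _ : Fin (m + 2) => V) ℝ)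
    -- `φ ∈ 𝕊⊥ ⊗ 𝕊⊥^{j−1}` (here `j = m + 2`):
    (hφ : ∀ x : V, memS L (m + 1) (fun v => φ (Fin.cons x v))) :
    -- `ð φ = 0 ↔ φ ∈ 𝕊⊥^j`, i.e. the sequence is exact at the middle term:
    (∀ (x y : V) (w : Fin m → V),
        (1 / 2 : ℝ) * (φ (Fin.cons x (Fin.cons y w)) - φ (Fin.cons y (Fin.cons x w))) -
          (1 / (2 * n : ℝ)) * L x y *
            (∑ a, ∑ b, Linv a b *
              ((1 / 2 : ℝ) *
                (φ (Fin.cons (e a) (Fin.cons (e b) w)) -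
                  φ (Fin.cons (e b) (Fin.cons (e a) w))))) = 0) ↔
      memS L (m + 2) (fun v => φ v) := by
  have hn0 : (n : ℝ) ≠ 0 := Nat.cast_ne_zero.mpr (by omega)
  have h2n : (2 * (n : ℝ)) ≠ 0 := mul_ne_zero two_ne_zero hn0
  constructor
  · intro h
    apply memS_build L m (fun v => φ v) hφ
    intro w
    refine ⟨(1 / (2 * (n : ℝ))) *
      (∑ a, ∑ b, Linv a b *
        ((1 / 2 : ℝ) *
          (φ (Fin.cons (e a) (Fin.cons (e b) w)) -
            φ (Fin.cons (e b) (Fin.cons (e a) w))))), fun x y => ?_⟩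
    have := h x y w
    push_cast at this ⊢
    linear_combination 2 * this
  · intro h x y w
    obtain ⟨Q, hQ⟩ := memS_pair0 L h w
    have hterm : ∀ a b, (1 / 2 : ℝ) *
        (φ (Fin.cons (e a) (Fin.cons (e b) w)) - φ (Fin.cons (e b) (Fin.cons (e a) w)))
          = Q * L (e a) (e b) := by
      intro a b
      have := hQ (e a) (e b)
      linarith
    have hsum : (∑ a, ∑ b, Linv a b *
        ((1 / 2 : ℝ) *
          (φ (Fin.cons (e a) (Fin.cons (e b) w)) -
            φ (Fin.cons (e b) (Fin.cons (e a) w))))) = Q * (2 * n) := by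
      calc (∑ a, ∑ b, Linv a b *
          ((1 / 2 : ℝ) *
            (φ (Fin.cons (e a) (Fin.cons (e b) w)) -
              φ (Fin.cons (e b) (Fin.cons (e a) w)))))
          = ∑ a, ∑ b, Linv a b * (Q * L (e a) (e b)) := by
            refine Finset.sum_congr rfl fun a _ => Finset.sum_congr rfl fun b _ => ?_
            rw [hterm]
        _ = ∑ b, ∑ a, Linv a b * (Q * L (e a) (e b)) := Finset.sum_comm
        _ = ∑ b : Fin (2 * n), Q * 1 := by
            refine Finset.sum_congr rfl fun b _ => ?_
            have : (∑ a, Linv a b * (Q * L (e a) (e b)))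
                = Q * ∑ a, Linv a b * L (e a) (e b) := by
              rw [Finset.mul_sum]
              exact Finset.sum_congr rfl fun a _ => by ring
            rw [this, hinv b b, if_pos rfl]
        _ = Q * (2 * n) := by
            simp [Finset.sum_const, Finset.card_univ]
            push_cast
            ring
    rw [hsum, hQ x y]
    field_simp
    ring
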